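/- arXiv:2207.13312 — 4 statements merged into one kernel-verified Lean document; each statement's English description precedes it below -/
import Mathlib

section
/- For every f : 𝔽₂ⁿ → [-1,1] and every δ > 0, there exists an affine subspace 𝒰 = α + 𝒱 of 𝔽₂ⁿ with codimension codim(𝒱) = n − dim(𝒱) at most 1/δ such that the restriction f_𝒰 is δ-regular. -/
/-!
Density increment. If the restriction of `f` to `α + V` is not `δ`-regular, there are `γ` and
`v ∈ V` with `⟨γ, v⟩ = 1` and `|f̂_𝒰(γ)| > δ`. Splitting `V` into `K = V ∩ ker ⟨γ, ·⟩` and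
`v + K`, the means of `f` on `α + K` and `α + v + K` are `M + f̂_𝒰(γ)` and `M - f̂_𝒰(γ)`, where
`M` is the mean on `α + V`; so on one of these cosets of codimension one in `α + V` the absolute
mean exceeds `|M| + δ`. Starting from `V = 𝔽₂ⁿ`, every step adds one to the codimension and more
than `δ` to the absolute mean, which never exceeds `1`; so the process stops at a `δ`-regular
restriction of codimension at most `1/δ`.
-/

open Finset

abbrev F2 (n : ℕ) := Fin n → ZMod 2

/-- The 𝔽₂ bilinear form ⟨γ,x⟩ = Σᵢ γᵢ xᵢ. -/
def ip {n : ℕ} (γ x : F2 n) : ZMod 2 := ∑ i, γ i * x i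

/-- The character χ_γ(x) = (-1)^⟨γ,x⟩. -/
noncomputable def chi {n : ℕ} (γ x : F2 n) : ℝ := (-1 : ℝ) ^ (ip γ x).val

/-- Fourier coefficient f̂(γ) = 2^{-n} Σ_x f(x) (-1)^⟨γ,x⟩. -/
noncomputable def fCoeff {n : ℕ} (f : F2 n → ℝ) (γ : F2 n) : ℝ :=
  (∑ x : F2 n, f x * chi γ x) / 2 ^ n

/-- f has Fourier degree at most d. -/
def HasFourierDegLE {n : ℕ} (f : F2 n → ℝ) (d : ℕ) : Prop :=
  ∀ γ : F2 n, d < hammingNorm γ → fCoeff f γ = 0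

/-- Orthogonal subspace 𝒱^⊥. -/
def perp {n : ℕ} (V : Submodule (ZMod 2) (F2 n)) : Submodule (ZMod 2) (F2 n) where
  carrier := {γ | ∀ v ∈ V, ip γ v = 0}
  zero_mem' := by
    intro v _
    simp [ip]
  add_mem' := by
    intro a b ha hb v hv
    have h : ip (a + b) v = ip a v + ip b v := by
      simp [ip, add_mul, Finset.sum_add_distrib]
    simp only [Set.mem_setOf_eq] at ha hb ⊢
    rw [h, ha v hv, hb v hv, add_zero]
  smul_mem' := by
    intro c a ha v hv
    have h : ip (c • a) v = c * ip a v := by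
      simp [ip, Finset.mul_sum, mul_assoc]
    simp only [Set.mem_setOf_eq] at ha ⊢
    rw [h, ha v hv, mul_zero]

/-- Fourier coefficient of the restriction of f to the affine subspace α + 𝒱,
indexed by γ (from a complement 𝒲 of 𝒱^⊥):
f̂_𝒰(γ) = |𝒱|⁻¹ Σ_{x ∈ 𝒱} f(x+α)(-1)^⟨γ,x⟩. -/
noncomputable def restrictCoeff {n : ℕ} (f : F2 n → ℝ) (V : Submodule (ZMod 2) (F2 n))
    (α γ : F2 n) : ℝ :=
  (∑ x : F2 n, Set.indicator (V : Set (F2 n)) (fun x => f (x + α) * chi γ x) x) / (Nat.card V)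

/-- The restriction of f to α + 𝒱 is δ-regular. -/
def IsDeltaRegular {n : ℕ} (f : F2 n → ℝ) (V : Submodule (ZMod 2) (F2 n)) (α : F2 n)
    (δ : ℝ) : Prop :=
  ∀ W : Submodule (ZMod 2) (F2 n), IsCompl W (perp V) →
    ∀ γ ∈ W, γ ≠ 0 → |restrictCoeff f V α γ| ≤ δ

/-- span of the standard basis vectors indexed by J. -/
def spanJ {n : ℕ} (J : Finset (Fin n)) : Submodule (ZMod 2) (F2 n) where
  carrier := {x | ∀ i ∉ J, x i = 0}
  zero_mem' := by intro i _; rfl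
  add_mem' := by
    intro a b ha hb i hi
    simp only [Set.mem_setOf_eq] at ha hb ⊢
    simp [Pi.add_apply, ha i hi, hb i hi]
  smul_mem' := by
    intro c a ha i hi
    simp only [Set.mem_setOf_eq] at ha ⊢
    simp [Pi.smul_apply, ha i hi]


lemma ZMod.eq_zero_or_one (a : ZMod 2) : a = 0 ∨ a = 1 := by
  revert a; decide

lemma abs_add_abs_le_max_abs_add_abs_sub {α : Type*} [AddCommGroup α] [LinearOrder α]
    [IsOrderedAddMonoid α] (a b : α) : |a| + |b| ≤ max |a + b| |a - b| := by
  rcases le_total 0 a with ha | ha <;> rcases le_total 0 b with hb | hb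
  · simpa [abs_of_nonneg ha, abs_of_nonneg hb] using le_max_of_le_left (le_abs_self (a + b))
  · simpa [abs_of_nonneg ha, abs_of_nonpos hb, sub_eq_add_neg] using
      le_max_of_le_right (le_abs_self (a - b))
  · simpa [abs_of_nonpos ha, abs_of_nonneg hb, add_comm] using
      le_max_of_le_right (neg_le_abs (a - b))
  · simpa [abs_of_nonpos ha, abs_of_nonpos hb, add_comm] using
      le_max_of_le_left (neg_le_abs (a + b))

section Hyperplane

variable {E : Type*} [AddCommGroup E] [Module (ZMod 2) E]

namespace Submodule

variable (V : Submodule (ZMod 2) E) {φ : Module.Dual (ZMod 2) E} {v : E}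

/-- `V` is the disjoint union of the hyperplane `V ⊓ ker φ` and its translate by `v`. -/
lemma indicator_eq_add_indicator_inf_ker (hv : v ∈ V) (hφv : φ v = 1) (g : E → ℝ) (x : E) :
    (V : Set E).indicator g x
      = ((V ⊓ LinearMap.ker φ : Submodule (ZMod 2) E) : Set E).indicator g x
        + ((V ⊓ LinearMap.ker φ : Submodule (ZMod 2) E) : Set E).indicator
            (fun y => g (y + v)) (x + v) := by
  classical
  simp only [Set.indicator_apply, SetLike.mem_coe, mem_inf, LinearMap.mem_ker, map_add, hφv,
    V.add_mem_iff_left hv, add_assoc, ZModModule.add_self, add_zero]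
  by_cases hx : x ∈ V
  · rcases ZMod.eq_zero_or_one (φ x) with h | h <;> simp [hx, h, ZModModule.add_self]
  · simp [hx]

variable [Fintype E]

lemma sum_indicator_eq_add_sum_indicator_inf_ker (hv : v ∈ V) (hφv : φ v = 1) (g : E → ℝ) :
    ∑ x, (V : Set E).indicator g x
      = ∑ x, ((V ⊓ LinearMap.ker φ : Submodule (ZMod 2) E) : Set E).indicator g x
        + ∑ x, ((V ⊓ LinearMap.ker φ : Submodule (ZMod 2) E) : Set E).indicator
            (fun y => g (y + v)) x := by
  rw [← Equiv.sum_comp (Equiv.addRight v)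
      (((V ⊓ LinearMap.ker φ : Submodule (ZMod 2) E) : Set E).indicator (fun y => g (y + v))),
    ← sum_add_distrib]
  exact sum_congr rfl fun x _ => V.indicator_eq_add_indicator_inf_ker hv hφv g x

lemma natCard_eq_sum_indicator_one :
    (Nat.card V : ℝ) = ∑ x, (V : Set E).indicator (fun _ => 1) x := by
  classical
  simp [Set.indicator_apply, Finset.sum_boole, Nat.card_eq_fintype_card, Fintype.card_subtype]

lemma natCard_eq_two_mul_natCard_inf_ker (hv : v ∈ V) (hφv : φ v = 1) :
    Nat.card V = 2 * Nat.card (V ⊓ LinearMap.ker φ : Submodule (ZMod 2) E) := by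
  have h := V.sum_indicator_eq_add_sum_indicator_inf_ker hv hφv fun _ => 1
  rw [← natCard_eq_sum_indicator_one, ← natCard_eq_sum_indicator_one, ← two_mul] at h
  exact_mod_cast h

lemma finrank_eq_finrank_inf_ker_add_one (hv : v ∈ V) (hφv : φ v = 1) :
    Module.finrank (ZMod 2) V
      = Module.finrank (ZMod 2) (V ⊓ LinearMap.ker φ : Submodule (ZMod 2) E) + 1 := by
  have h := V.natCard_eq_two_mul_natCard_inf_ker hv hφv
  rw [Module.natCard_eq_pow_finrank (K := ZMod 2) (V := V),
    Module.natCard_eq_pow_finrank (K := ZMod 2) (V := (V ⊓ LinearMap.ker φ : Submodule (ZMod 2) E)),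
    Nat.card_zmod, ← pow_succ'] at h
  exact Nat.pow_right_injective le_rfl h

end Submodule

variable [Fintype E]

noncomputable def avgOn (V : Submodule (ZMod 2) E) (g : E → ℝ) : ℝ :=
  (∑ x, (V : Set E).indicator g x) / Nat.card V

lemma abs_avgOn_le_one (V : Submodule (ZMod 2) E) {g : E → ℝ} (hg : ∀ x, |g x| ≤ 1) :
    |avgOn V g| ≤ 1 := by
  have hV : (0 : ℝ) < Nat.card V := by exact_mod_cast Nat.card_pos
  rw [avgOn, abs_div, Nat.abs_cast, div_le_one hV, V.natCard_eq_sum_indicator_one]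
  refine (abs_sum_le_sum_abs _ _).trans (sum_le_sum fun x _ => ?_)
  by_cases hx : x ∈ (V : Set E) <;> simp [hx, hg x]

variable (V : Submodule (ZMod 2) E) {φ : Module.Dual (ZMod 2) E} {v : E}
  (hv : v ∈ V) (hφv : φ v = 1) (g : E → ℝ)
include hv hφv

lemma avgOn_eq_half_add :
    avgOn V g
      = (avgOn (V ⊓ LinearMap.ker φ) g + avgOn (V ⊓ LinearMap.ker φ) fun y => g (y + v)) / 2 := by
  rw [avgOn, avgOn, avgOn, V.sum_indicator_eq_add_sum_indicator_inf_ker hv hφv,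
    V.natCard_eq_two_mul_natCard_inf_ker hv hφv]
  push_cast
  field_simp

lemma avgOn_mul_sign_eq_half_sub :
    avgOn V (fun x => g x * (-1) ^ (φ x).val)
      = (avgOn (V ⊓ LinearMap.ker φ) g - avgOn (V ⊓ LinearMap.ker φ) fun y => g (y + v)) / 2 := by
  rw [avgOn, avgOn, avgOn, V.sum_indicator_eq_add_sum_indicator_inf_ker hv hφv,
    V.natCard_eq_two_mul_natCard_inf_ker hv hφv]
  set K : Submodule (ZMod 2) E := V ⊓ LinearMap.ker φ
  have hφK : ∀ x ∈ (K : Set E), φ x = 0 := fun x hx => hx.2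
  have h_even : (K : Set E).indicator (fun x => g x * (-1) ^ (φ x).val) = (K : Set E).indicator g :=
    Set.indicator_congr fun x hx => by simp [hφK x hx]
  have h_odd : (K : Set E).indicator (fun x => g (x + v) * (-1) ^ (φ (x + v)).val)
      = (K : Set E).indicator (fun x => -g (x + v)) :=
    Set.indicator_congr fun x hx => by simp [hφK x hx, hφv, ZMod.val_one]
  rw [h_even, h_odd, Set.indicator_neg, sum_neg_distrib]
  push_cast
  field_simp
  ring

lemma abs_avgOn_add_abs_avgOn_mul_sign_le :
    |avgOn V g| + |avgOn V (fun x => g x * (-1) ^ (φ x).val)|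
      ≤ max |avgOn (V ⊓ LinearMap.ker φ) g| |avgOn (V ⊓ LinearMap.ker φ) fun y => g (y + v)| := by
  rw [avgOn_eq_half_add V hv hφv g, avgOn_mul_sign_eq_half_sub V hv hφv g]
  set a := avgOn (V ⊓ LinearMap.ker φ) g
  set b := avgOn (V ⊓ LinearMap.ker φ) fun y => g (y + v)
  calc |(a + b) / 2| + |(a - b) / 2|
      ≤ max |(a + b) / 2 + (a - b) / 2| |(a + b) / 2 - (a - b) / 2| :=
        abs_add_abs_le_max_abs_add_abs_sub _ _
    _ = max |a| |b| := by ring_nf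

end Hyperplane

section Restriction

variable {n : ℕ}

lemma restrictCoeff_zero_eq_avgOn (f : F2 n → ℝ) (V : Submodule (ZMod 2) (F2 n)) (α : F2 n) :
    restrictCoeff f V α 0 = avgOn V fun x => f (x + α) := by
  simp [restrictCoeff, avgOn, chi, ip]

lemma exists_ip_eq_one_of_not_isDeltaRegular {f : F2 n → ℝ} {V : Submodule (ZMod 2) (F2 n)}
    {α : F2 n} {δ : ℝ} (h : ¬ IsDeltaRegular f V α δ) :
    ∃ γ, δ < |restrictCoeff f V α γ| ∧ ∃ v ∈ V, ip γ v = 1 := by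
  simp only [IsDeltaRegular, not_forall, not_le] at h
  obtain ⟨W, hW, γ, hγW, hγ, hδ⟩ := h
  refine ⟨γ, hδ, ?_⟩
  have hγ_perp : ¬ ∀ v ∈ V, ip γ v = 0 := fun hγV =>
    hγ (Submodule.disjoint_def.1 hW.disjoint γ hγW hγV)
  obtain ⟨v, hv, hγv⟩ := not_forall₂.1 hγ_perp
  exact ⟨v, hv, (ZMod.eq_zero_or_one _).resolve_left hγv⟩

lemma exists_abs_restrictCoeff_zero_gt_of_not_isDeltaRegular {f : F2 n → ℝ}
    {V : Submodule (ZMod 2) (F2 n)} {α : F2 n} {δ : ℝ} (h : ¬ IsDeltaRegular f V α δ) :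
    ∃ (K : Submodule (ZMod 2) (F2 n)) (β : F2 n),
      Module.finrank (ZMod 2) K + 1 = Module.finrank (ZMod 2) V ∧
      |restrictCoeff f V α 0| + δ < |restrictCoeff f K β 0| := by
  obtain ⟨γ, hδ, v, hv, hγv⟩ := exists_ip_eq_one_of_not_isDeltaRegular h
  have hφv : dotProductEquiv (ZMod 2) (Fin n) γ v = 1 := hγv
  have key := abs_avgOn_add_abs_avgOn_mul_sign_le V hv hφv fun x => f (x + α)
  have hcoeff : avgOn V (fun x => f (x + α) * (-1) ^ (dotProductEquiv (ZMod 2) (Fin n) γ x).val)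
      = restrictCoeff f V α γ := rfl
  rw [hcoeff] at key
  have hrank := (V.finrank_eq_finrank_inf_ker_add_one hv hφv).symm
  simp only [restrictCoeff_zero_eq_avgOn] at key ⊢
  rcases le_max_iff.1 key with hmax | hmax
  · exact ⟨_, α, hrank, by linarith⟩
  · refine ⟨_, α + v, hrank, ?_⟩
    simp_rw [← add_assoc, add_right_comm _ α v]
    linarith

theorem exists_isDeltaRegular_mean_increment (f : F2 n → ℝ) (δ : ℝ)
    (V : Submodule (ZMod 2) (F2 n)) (α : F2 n) :
    ∃ (V' : Submodule (ZMod 2) (F2 n)) (α' : F2 n), IsDeltaRegular f V' α' δ ∧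
      Module.finrank (ZMod 2) V' ≤ Module.finrank (ZMod 2) V ∧
      |restrictCoeff f V α 0|
          + δ * ((Module.finrank (ZMod 2) V : ℝ) - Module.finrank (ZMod 2) V')
        ≤ |restrictCoeff f V' α' 0| := by
  induction hd : Module.finrank (ZMod 2) V using Nat.strong_induction_on generalizing V α with
  | _ d ih =>
  subst hd
  by_cases hreg : IsDeltaRegular f V α δ
  · exact ⟨V, α, hreg, le_rfl, by simp⟩
  obtain ⟨K, β, hK, hinc⟩ := exists_abs_restrictCoeff_zero_gt_of_not_isDeltaRegular hreg
  obtain ⟨V', α', hreg', hle, hV'⟩ := ih _ (by omega) K β rfl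
  refine ⟨V', α', hreg', by omega, ?_⟩
  rw [← hK]
  push_cast
  linarith

end Restriction

/-- Folklore: r(f,δ) ≤ 1/δ. -/
theorem regularity_codim_le_inv_delta (n : ℕ) (f : F2 n → ℝ)
    (hbd : ∀ x, f x ∈ Set.Icc (-1 : ℝ) 1) (δ : ℝ) (hδ : 0 < δ) :
    ∃ (V : Submodule (ZMod 2) (F2 n)) (α : F2 n),
      ((n - Module.finrank (ZMod 2) V : ℕ) : ℝ) ≤ 1 / δ ∧ IsDeltaRegular f V α δ := by
  obtain ⟨V, α, hreg, hle, hinc⟩ := exists_isDeltaRegular_mean_increment f δ ⊤ 0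
  rw [finrank_top, Module.finrank_fin_fun] at hle hinc
  have hmean : |restrictCoeff f V α 0| ≤ 1 := by
    rw [restrictCoeff_zero_eq_avgOn]
    exact abs_avgOn_le_one V fun x => abs_le.2 (hbd _)
  refine ⟨V, α, ?_, hreg⟩
  rw [Nat.cast_sub hle, le_div_iff₀ hδ]
  linarith [abs_nonneg (restrictCoeff f ⊤ 0 0)]
end

section
/- For every f : 𝔽₂ⁿ → [0,1] and every δ > 0, there exists a partition Π of 𝔽₂ⁿ all of whose parts are affine subspaces of codimension at most 1/δ³, such that the set of points x ∈ 𝔽₂ⁿ whose part π ∈ Π has restriction f_π that is not δ-regular has size at most δ·2ⁿ. -/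
open Finset

/-!
Energy increment. The energy of a partition into affine subspaces is `∑ₓ m(x)²`, where `m(x)` is
the mean of `f` on the part of `x`; it lies in `[0, 2ⁿ]`. These means are conditional expectations,
so along a refinement the energy grows by `∑ₓ (m'(x) - m(x))²`. Cutting an irregular part
`α + V` along a hyperplane `ker γ` with `|f̂_π(γ)| > δ` moves the mean of each half by `± f̂_π(γ)`.
Cutting all irregular parts at once raises the codimension by at most one and, while more than
`δ 2ⁿ` points are irregular, the energy by at least `δ³ 2ⁿ`; so after `⌊1/δ³⌋` rounds the
partition must be regular.
-/

section FiberAverage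

variable {X ι κ : Type*} [Fintype X] [DecidableEq ι] [DecidableEq κ]

noncomputable def fiberAvg (L : X → ι) (g : X → ℝ) (x : X) : ℝ :=
  (∑ y with L y = L x, g y) / #{y | L y = L x}

lemma fiberAvg_congr {L : X → ι} (g : X → ℝ) {x y : X} (h : L y = L x) :
    fiberAvg L g y = fiberAvg L g x := by
  simp only [fiberAvg, h]

lemma fiberAvg_id [DecidableEq X] (g : X → ℝ) (x : X) : fiberAvg id g x = g x := by
  simp [fiberAvg, filter_eq']

lemma sum_fiberAvg (L : X → ι) (g : X → ℝ) : ∑ x, fiberAvg L g x = ∑ x, g x := by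
  have hL : ∀ x ∈ (univ : Finset X), L x ∈ univ.image L :=
    fun x _ => mem_image_of_mem L (mem_univ x)
  rw [← sum_fiberwise_of_maps_to hL, ← sum_fiberwise_of_maps_to hL]
  refine sum_congr rfl fun i hi => ?_
  obtain ⟨x, -, rfl⟩ := mem_image.1 hi
  have hx : (#{y | L y = L x} : ℝ) ≠ 0 := by exact_mod_cast (card_pos.2 ⟨x, by simp⟩).ne'
  rw [sum_congr rfl fun y hy => fiberAvg_congr g (mem_filter.1 hy).2, sum_const, nsmul_eq_mul,
    fiberAvg, mul_div_cancel₀ _ hx]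

lemma sum_fiberAvg_mul {L : X → ι} (g u : X → ℝ) (hu : ∀ x y, L y = L x → u y = u x) :
    ∑ x, fiberAvg L g x * u x = ∑ x, g x * u x := by
  rw [← sum_fiberAvg L (fun y => g y * u y)]
  refine sum_congr rfl fun x _ => ?_
  rw [fiberAvg, fiberAvg, div_mul_eq_mul_div, sum_mul]
  congr 1
  exact sum_congr rfl fun y hy => by rw [hu x y (mem_filter.1 hy).2]

lemma sum_sq_fiberAvg_of_refines {L : X → ι} {L' : X → κ}
    (h : ∀ x y, L' y = L' x → L y = L x) (g : X → ℝ) :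
    ∑ x, fiberAvg L' g x ^ 2
      = ∑ x, fiberAvg L g x ^ 2 + ∑ x, (fiberAvg L' g x - fiberAvg L g x) ^ 2 := by
  set m := fiberAvg L g
  set m' := fiberAvg L' g
  have h₁ : ∑ x, m' x * m' x = ∑ x, g x * m' x :=
    sum_fiberAvg_mul g m' fun x y hy => fiberAvg_congr g hy
  have h₂ : ∑ x, m' x * m x = ∑ x, g x * m x :=
    sum_fiberAvg_mul g m fun x y hy => fiberAvg_congr g (h x y hy)
  have h₃ : ∑ x, m x * m x = ∑ x, g x * m x :=
    sum_fiberAvg_mul g m fun x y hy => fiberAvg_congr g hy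
  have hexp : ∀ x, (m' x - m x) ^ 2 = m' x * m' x - 2 * (m' x * m x) + m x * m x := fun x => by
    ring
  simp only [sq, hexp, sum_add_distrib, sum_sub_distrib, ← mul_sum]
  linarith

lemma sum_sq_fiberAvg_le (L : X → ι) (g : X → ℝ) : ∑ x, fiberAvg L g x ^ 2 ≤ ∑ x, g x ^ 2 := by
  classical
  have h := sum_sq_fiberAvg_of_refines (L' := id) (fun x y hxy => congrArg L hxy) g
  simp only [fiberAvg_id] at h
  rw [h]
  exact le_add_of_nonneg_right (sum_nonneg fun x _ => sq_nonneg _)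

end FiberAverage

section Characters

open Classical

variable {n : ℕ}

lemma ip_add_right (γ x y : F2 n) : ip γ (x + y) = ip γ x + ip γ y := dotProduct_add γ x y

lemma ip_smul_right (γ : F2 n) (c : ZMod 2) (x : F2 n) : ip γ (c • x) = c * ip γ x :=
  dotProduct_smul c γ x

lemma ip_zero_left (x : F2 n) : ip 0 x = 0 := zero_dotProduct x

lemma chi_zero_left (x : F2 n) : chi 0 x = 1 := by simp [chi, ip_zero_left]

def ipKer (γ : F2 n) : Submodule (ZMod 2) (F2 n) :=
  LinearMap.ker (dotProductBilin (ZMod 2) (ZMod 2) γ)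

lemma mem_ipKer {γ x : F2 n} : x ∈ ipKer γ ↔ ip γ x = 0 := Iff.rfl

lemma ip_add_ip_smul {γ v : F2 n} (h : γ = 0 ∨ ip γ v = 1) (z w : F2 n) :
    ip γ (z + ip γ w • v) = ip γ (z + w) := by
  rcases h with rfl | h
  · simp only [ip_zero_left]
  · rw [ip_add_right, ip_smul_right, h, mul_one, ip_add_right]

lemma two_mul_ite_add_eq_zero (a c : ZMod 2) (r : ℝ) :
    2 * (if a + c = 0 then r else 0) = r + (-1) ^ c.val * (r * (-1) ^ a.val) := by
  have h01 : ∀ b : ZMod 2, b = 0 ∨ b = 1 := by decide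
  rcases h01 a with rfl | rfl <;> rcases h01 c with rfl | rfl <;>
    simp [show (1 : ZMod 2) + 1 = 0 from rfl, ZMod.val_one] <;> ring

lemma sum_indicator_add_right (V : Submodule (ZMod 2) (F2 n)) (α : F2 n) (g : F2 n → ℝ) :
    ∑ x, (V : Set (F2 n)).indicator (fun x => g (x + α)) x = ∑ y with y + α ∈ V, g y := by
  rw [← Equiv.sum_comp (Equiv.addRight α), sum_filter]
  refine sum_congr rfl fun y _ => ?_
  simp [Set.indicator_apply, add_assoc, ZModModule.add_self]

/-- Halving along `γ`: the shift by `c • v` moves `V ∩ ker γ` onto the half of `V` where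
`⟨γ, ·⟩ = c`. -/
lemma two_mul_sum_indicator_inf_ipKer {V : Submodule (ZMod 2) (F2 n)} {γ v : F2 n}
    (hv : v ∈ V) (hγv : ip γ v = 1) (c : ZMod 2) (g : F2 n → ℝ) :
    2 * ∑ x, ((V ⊓ ipKer γ : Submodule (ZMod 2) (F2 n)) : Set (F2 n)).indicator
        (fun x => g (x + c • v)) x
      = ∑ x, (V : Set (F2 n)).indicator g x
        + (-1) ^ c.val * ∑ x, (V : Set (F2 n)).indicator (fun x => g x * chi γ x) x := by
  rw [← Equiv.sum_comp (Equiv.addRight (c • v)), mul_sum, mul_sum, ← sum_add_distrib]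
  refine sum_congr rfl fun x _ => ?_
  have hmem : x + c • v ∈ V ↔ x ∈ V := V.add_mem_iff_left (V.smul_mem c hv)
  have hip : ip γ (x + c • v) = ip γ x + c := by rw [ip_add_right, ip_smul_right, hγv, mul_one]
  by_cases hx : x ∈ V
  · simp only [Equiv.coe_addRight, Set.indicator_apply, SetLike.mem_coe, Submodule.mem_inf,
      mem_ipKer, hmem, hip, hx, true_and, if_true, add_assoc, ZModModule.add_self, add_zero, chi]
    exact two_mul_ite_add_eq_zero _ _ _
  · simp [hmem, hx]

lemma natCard_eq_sum_indicator (V : Submodule (ZMod 2) (F2 n)) :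
    (Nat.card V : ℝ) = ∑ x, (V : Set (F2 n)).indicator (fun _ => 1) x := by
  rw [sum_indicator_eq_sum_filter, sum_const, nsmul_eq_mul, mul_one, Nat.card_eq_fintype_card,
    Fintype.card_subtype]
  rfl

lemma two_mul_natCard_inf_ipKer {V : Submodule (ZMod 2) (F2 n)} {γ v : F2 n}
    (hv : v ∈ V) (hγv : ip γ v = 1) :
    2 * (Nat.card (V ⊓ ipKer γ : Submodule (ZMod 2) (F2 n)) : ℝ) = Nat.card V := by
  have h₀ := two_mul_sum_indicator_inf_ipKer hv hγv 0 (fun _ => 1)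
  have h₁ := two_mul_sum_indicator_inf_ipKer hv hγv 1 (fun _ => 1)
  simp only [one_mul, ZMod.val_zero, ZMod.val_one, pow_zero, pow_one] at h₀ h₁
  rw [natCard_eq_sum_indicator, natCard_eq_sum_indicator]
  linarith

lemma restrictCoeff_zero (f : F2 n → ℝ) (V : Submodule (ZMod 2) (F2 n)) (α : F2 n) :
    restrictCoeff f V α 0 = (∑ y with y + α ∈ V, f y) / #{y | y + α ∈ V} := by
  have hcard := sum_indicator_add_right V α (fun _ => 1)
  simp only [sum_const, nsmul_eq_mul, mul_one] at hcard
  simp only [restrictCoeff, chi_zero_left, mul_one, sum_indicator_add_right]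
  congr 1
  rw [natCard_eq_sum_indicator, ← hcard]

lemma restrictCoeff_inf_ipKer {V : Submodule (ZMod 2) (F2 n)} {γ v : F2 n}
    (hv : v ∈ V) (hγv : ip γ v = 1) (f : F2 n → ℝ) (α : F2 n) (c : ZMod 2) :
    restrictCoeff f (V ⊓ ipKer γ) (α + c • v) 0
      = restrictCoeff f V α 0 + (-1) ^ c.val * restrictCoeff f V α γ := by
  have hcard := two_mul_natCard_inf_ipKer hv hγv
  have hsum := two_mul_sum_indicator_inf_ipKer hv hγv c (fun x => f (x + α))
  have hpos : (0 : ℝ) < Nat.card (V ⊓ ipKer γ : Submodule (ZMod 2) (F2 n)) := by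
    exact_mod_cast Nat.card_pos
  simp only [restrictCoeff, chi_zero_left, mul_one, ← hcard, add_comm α, ← add_assoc] at hsum ⊢
  field_simp
  linarith

end Characters

section HalfCosets

variable {n : ℕ} {V : Submodule (ZMod 2) (F2 n)} {γ v α x y : F2 n}

lemma add_add_ip_smul_mem_inf_ipKer (hv : v ∈ V) (hγv : γ = 0 ∨ ip γ v = 1) (hx : x + α ∈ V) :
    x + (α + ip γ (x + α) • v) ∈ V ⊓ ipKer γ := by
  rw [← add_assoc]
  refine ⟨V.add_mem hx (V.smul_mem _ hv), ?_⟩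
  rw [SetLike.mem_coe, mem_ipKer, ip_add_ip_smul hγv, ZModModule.add_self]
  exact dotProduct_zero γ

lemma add_mem_of_add_add_smul_mem (hv : v ∈ V) {c : ZMod 2} (hy : y + (α + c • v) ∈ V) :
    y + α ∈ V := by
  simpa [← add_assoc, add_assoc _ (c • v), ZModModule.add_self] using V.add_mem hy (V.smul_mem c hv)

lemma ip_eq_of_add_add_ip_smul_mem_ipKer (hγv : γ = 0 ∨ ip γ v = 1)
    (hy : y + (α + ip γ (x + α) • v) ∈ ipKer γ) : ip γ (y + α) = ip γ (x + α) := by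
  rw [mem_ipKer, ← add_assoc, ip_add_ip_smul hγv, ip_add_right] at hy
  exact CharTwo.add_eq_zero.1 hy

end HalfCosets

lemma exists_coeff_gt_of_not_isDeltaRegular {n : ℕ} {f : F2 n → ℝ} {V : Submodule (ZMod 2) (F2 n)}
    {α : F2 n} {δ : ℝ} (h : ¬ IsDeltaRegular f V α δ) :
    ∃ γ v, v ∈ V ∧ ip γ v = 1 ∧ δ < |restrictCoeff f V α γ| := by
  simp only [IsDeltaRegular, not_forall, not_le] at h
  obtain ⟨W, hW, γ, hγW, hγ0, hγ⟩ := h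
  have hγV : γ ∉ perp V := fun hγV => hγ0 ((Submodule.disjoint_def.1 hW.disjoint) γ hγW hγV)
  obtain ⟨v, hv, hγv⟩ : ∃ v ∈ V, ip γ v ≠ 0 := by simpa [perp] using hγV
  have h1 : ∀ b : ZMod 2, b ≠ 0 → b = 1 := by decide
  exact ⟨γ, v, hv, h1 _ hγv, hγ⟩

lemma finrank_le_finrank_inf_ker_add_one {K E : Type*} [DivisionRing K] [AddCommGroup E]
    [Module K E] [FiniteDimensional K E] (V : Submodule K E) (φ : E →ₗ[K] K) :
    Module.finrank K V ≤ Module.finrank K (V ⊓ LinearMap.ker φ : Submodule K E) + 1 := by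
  have hsup := Submodule.finrank_sup_add_finrank_inf_eq V (LinearMap.ker φ)
  have hker := LinearMap.finrank_range_add_finrank_ker φ
  have hrange : Module.finrank K (LinearMap.range φ) ≤ 1 :=
    (Submodule.finrank_le _).trans (Module.finrank_self K).le
  have hle := Submodule.finrank_le (V ⊔ LinearMap.ker φ)
  omega

/-- The part of `x` is the coset `base x + direction x`. Both data are constant on each part,
so the partition is the fibre partition of `x ↦ (direction x, base x)`. -/
structure AffinePartition (n : ℕ) where
  direction : F2 n → Submodule (ZMod 2) (F2 n)
  base : F2 n → F2 n
  add_base_mem : ∀ x, x + base x ∈ direction x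
  eq_of_add_base_mem : ∀ x y, y + base x ∈ direction x → direction y = direction x ∧ base y = base x

namespace AffinePartition

open Classical

variable {n : ℕ} (P : AffinePartition n)

def label (x : F2 n) : Submodule (ZMod 2) (F2 n) × F2 n := (P.direction x, P.base x)

lemma label_eq_iff {x y : F2 n} : P.label y = P.label x ↔ y + P.base x ∈ P.direction x := by
  refine ⟨fun h => ?_, fun h => ?_⟩
  · obtain ⟨hV, hα⟩ := Prod.mk.inj h
    simpa [hV, hα] using P.add_base_mem y
  · obtain ⟨hV, hα⟩ := P.eq_of_add_base_mem x y h
    simp [label, hV, hα]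

noncomputable def mean (f : F2 n → ℝ) (x : F2 n) : ℝ := restrictCoeff f (P.direction x) (P.base x) 0

lemma mean_eq_fiberAvg (f : F2 n → ℝ) : P.mean f = fiberAvg P.label f := by
  ext x
  simp only [mean, restrictCoeff_zero, fiberAvg, P.label_eq_iff]

noncomputable def energy (f : F2 n → ℝ) : ℝ := ∑ x, P.mean f x ^ 2

lemma energy_le {f : F2 n → ℝ} (hbd : ∀ x, f x ∈ Set.Icc (0 : ℝ) 1) : P.energy f ≤ 2 ^ n := by
  calc P.energy f ≤ ∑ x, f x ^ 2 := by
        rw [energy, mean_eq_fiberAvg]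
        exact sum_sq_fiberAvg_le P.label f
    _ ≤ ∑ _x : F2 n, (1 : ℝ) := sum_le_sum fun x _ =>
        pow_le_one₀ (hbd x).1 (hbd x).2
    _ = 2 ^ n := by simp

def top : AffinePartition n where
  direction _ := ⊤
  base _ := 0
  add_base_mem _ := Submodule.mem_top
  eq_of_add_base_mem _ _ _ := ⟨rfl, rfl⟩

lemma finrank_top_direction (x : F2 n) : Module.finrank (ZMod 2) (top.direction x) = n := by
  rw [top, finrank_top, Module.finrank_fin_fun]

section Split

variable {Γ N : Submodule (ZMod 2) (F2 n) → F2 n → F2 n}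

/-- Cut every part `α + V` along the hyperplane `ker (Γ V α)`, a vector `N V α ∈ V` telling the
two halves apart; `Γ V α = 0` leaves the part whole. -/
def split (Γ N : Submodule (ZMod 2) (F2 n) → F2 n → F2 n) (hN : ∀ V α, N V α ∈ V)
    (hΓN : ∀ V α, Γ V α = 0 ∨ ip (Γ V α) (N V α) = 1) : AffinePartition n where
  direction x := P.direction x ⊓ ipKer (Γ (P.direction x) (P.base x))
  base x :=
    P.base x + ip (Γ (P.direction x) (P.base x)) (x + P.base x) • N (P.direction x) (P.base x)
  add_base_mem x := add_add_ip_smul_mem_inf_ipKer (hN _ _) (hΓN _ _) (P.add_base_mem x)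
  eq_of_add_base_mem x y hy := by
    obtain ⟨hV, hα⟩ := P.eq_of_add_base_mem x y
      (add_mem_of_add_add_smul_mem (hN _ _) (Submodule.mem_inf.1 hy).1)
    rw [hV, hα, ip_eq_of_add_add_ip_smul_mem_ipKer (hΓN _ _) (Submodule.mem_inf.1 hy).2]
    exact ⟨rfl, rfl⟩

variable (hN : ∀ V α, N V α ∈ V) (hΓN : ∀ V α, Γ V α = 0 ∨ ip (Γ V α) (N V α) = 1)
include hN hΓN

lemma label_eq_of_split_label_eq {x y : F2 n}
    (h : (P.split Γ N hN hΓN).label y = (P.split Γ N hN hΓN).label x) :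
    P.label y = P.label x :=
  P.label_eq_iff.2 <| add_mem_of_add_add_smul_mem (hN _ _)
    (Submodule.mem_inf.1 ((P.split Γ N hN hΓN).label_eq_iff.1 h)).1

lemma finrank_le_finrank_split_add_one (x : F2 n) :
    Module.finrank (ZMod 2) (P.direction x)
      ≤ Module.finrank (ZMod 2) ((P.split Γ N hN hΓN).direction x) + 1 :=
  finrank_le_finrank_inf_ker_add_one _ _

lemma mean_split {x : F2 n}
    (h : ip (Γ (P.direction x) (P.base x)) (N (P.direction x) (P.base x)) = 1) (f : F2 n → ℝ) :
    (P.split Γ N hN hΓN).mean f x = P.mean f x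
      + (-1) ^ (ip (Γ (P.direction x) (P.base x)) (x + P.base x)).val
        * restrictCoeff f (P.direction x) (P.base x) (Γ (P.direction x) (P.base x)) :=
  restrictCoeff_inf_ipKer (hN _ _) h f _ _

lemma energy_split (f : F2 n → ℝ) :
    (P.split Γ N hN hΓN).energy f
      = P.energy f + ∑ x, ((P.split Γ N hN hΓN).mean f x - P.mean f x) ^ 2 := by
  simp only [energy, mean_eq_fiberAvg]
  exact sum_sq_fiberAvg_of_refines (fun x y => P.label_eq_of_split_label_eq hN hΓN) f

end Split

variable {f : F2 n → ℝ} {δ : ℝ}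

noncomputable def irregular (f : F2 n → ℝ) (δ : ℝ) : Finset (F2 n) :=
  {x | ¬ IsDeltaRegular f (P.direction x) (P.base x) δ}

/-- Split every irregular part along a Fourier coefficient larger than `δ`. -/
lemma exists_split_energy_add_le (hδ : 0 < δ)
    (h : δ * 2 ^ n < #(P.irregular f δ)) :
    ∃ Q : AffinePartition n,
      (∀ x, Module.finrank (ZMod 2) (P.direction x) ≤ Module.finrank (ZMod 2) (Q.direction x) + 1) ∧
      P.energy f + δ ^ 3 * 2 ^ n ≤ Q.energy f := by
  choose! Γ N hN hΓN hΓ using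
    fun V α (h : ¬ IsDeltaRegular f V α δ) => exists_coeff_gt_of_not_isDeltaRegular h
  set Γ' := fun V α => if IsDeltaRegular f V α δ then 0 else Γ V α
  set N' := fun V α => if IsDeltaRegular f V α δ then 0 else N V α
  have hN' : ∀ V α, N' V α ∈ V := fun V α => by
    by_cases h : IsDeltaRegular f V α δ <;> simp [N', h, hN, zero_mem]
  have hΓN' : ∀ V α, Γ' V α = 0 ∨ ip (Γ' V α) (N' V α) = 1 := fun V α => by
    by_cases h : IsDeltaRegular f V α δ <;> simp [Γ', N', h, hΓN]
  set Q := P.split Γ' N' hN' hΓN'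
  have hgain : ∀ x, (if x ∈ P.irregular f δ then δ ^ 2 else 0) ≤ (Q.mean f x - P.mean f x) ^ 2 := by
    intro x
    split_ifs with hx
    · replace hx : ¬ IsDeltaRegular f (P.direction x) (P.base x) δ := by simpa [irregular] using hx
      rw [P.mean_split hN' hΓN' (by simp [Γ', N', hx, hΓN]) f, add_sub_cancel_left, mul_pow,
        ← pow_mul, pow_mul', neg_one_sq, one_pow, one_mul]
      simp only [Γ', hx, if_false]
      exact (pow_le_pow_left₀ hδ.le (hΓ _ _ hx).le 2).trans_eq (sq_abs _)
    · exact sq_nonneg _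
  refine ⟨Q, P.finrank_le_finrank_split_add_one hN' hΓN', ?_⟩
  calc P.energy f + δ ^ 3 * 2 ^ n ≤ P.energy f + #(P.irregular f δ) * δ ^ 2 := by
        nlinarith [pow_pos hδ 2]
    _ = P.energy f + ∑ x, if x ∈ P.irregular f δ then δ ^ 2 else 0 := by
        rw [sum_ite_mem, univ_inter, sum_const, nsmul_eq_mul]
    _ ≤ Q.energy f := by
        rw [P.energy_split hN' hΓN']
        exact (add_le_add_iff_left _).2 (sum_le_sum fun x _ => hgain x)

lemma exists_codim_le_and_card_irregular_le_or_energy_ge (hδ : 0 < δ) (f : F2 n → ℝ) :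
    ∀ k : ℕ, ∃ P : AffinePartition n, (∀ x, n - Module.finrank (ZMod 2) (P.direction x) ≤ k) ∧
      ((#(P.irregular f δ) : ℝ) ≤ δ * 2 ^ n ∨ k * (δ ^ 3 * 2 ^ n) ≤ P.energy f)
  | 0 => ⟨top, fun x => by simp [finrank_top_direction],
      Or.inr (by rw [Nat.cast_zero, zero_mul]; exact sum_nonneg fun x _ => sq_nonneg _)⟩
  | k + 1 => by
    obtain ⟨P, hcodim, hP⟩ := exists_codim_le_and_card_irregular_le_or_energy_ge hδ f k
    by_cases hreg : (#(P.irregular f δ) : ℝ) ≤ δ * 2 ^ n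
    · exact ⟨P, fun x => (hcodim x).trans k.le_succ, Or.inl hreg⟩
    obtain ⟨Q, hfinrank, hQ⟩ := P.exists_split_energy_add_le hδ (not_le.1 hreg)
    refine ⟨Q, fun x => by have := hcodim x; have := hfinrank x; omega, Or.inr ?_⟩
    push_cast
    linarith [hP.resolve_left hreg]

/-- Stop after `⌊1/δ³⌋₊` steps: one more energy increment would push the energy above `2ⁿ`. -/
theorem exists_codim_le_and_card_irregular_le (hbd : ∀ x, f x ∈ Set.Icc (0 : ℝ) 1)
    (hδ : 0 < δ) :
    ∃ P : AffinePartition n,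
      (∀ x, n - Module.finrank (ZMod 2) (P.direction x) ≤ ⌊1 / δ ^ 3⌋₊) ∧
      (Nat.card {x // ¬ IsDeltaRegular f (P.direction x) (P.base x) δ} : ℝ) ≤ δ * 2 ^ n := by
  obtain ⟨P, hcodim, hP⟩ := exists_codim_le_and_card_irregular_le_or_energy_ge hδ f ⌊1 / δ ^ 3⌋₊
  refine ⟨P, hcodim, ?_⟩
  rw [Nat.card_eq_fintype_card, Fintype.card_subtype]
  refine hP.elim id fun hE => not_lt.1 fun hirr => ?_
  obtain ⟨Q, -, hQ⟩ := P.exists_split_energy_add_le hδ hirr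
  have hK : 1 < (⌊1 / δ ^ 3⌋₊ + 1 : ℝ) * δ ^ 3 :=
    (div_lt_iff₀ (by positivity)).1 (Nat.lt_floor_add_one (1 / δ ^ 3))
  nlinarith [Q.energy_le hbd, mul_lt_mul_of_pos_right hK (by positivity : (0 : ℝ) < 2 ^ n)]

end AffinePartition

/-- pseudorandom partitions. There is a partition of 𝔽₂ⁿ into affine
subspaces of codimension at most 1/δ³ (the part of x is αp x + Vp x), such that the
set of points in irregular parts has size at most δ·2ⁿ. -/
theorem regular_partition_exists (n : ℕ) (f : F2 n → ℝ)
    (hbd : ∀ x, f x ∈ Set.Icc (0 : ℝ) 1) (δ : ℝ) (hδ : 0 < δ) :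
    ∃ (Vp : F2 n → Submodule (ZMod 2) (F2 n)) (αp : F2 n → F2 n),
      (∀ x, x + αp x ∈ Vp x) ∧
      (∀ x y : F2 n, y + αp x ∈ Vp x → Vp y = Vp x ∧ αp y + αp x ∈ Vp x) ∧
      (∀ x, ((n - Module.finrank (ZMod 2) (Vp x) : ℕ) : ℝ) ≤ 1 / δ ^ 3) ∧
      ((Nat.card {x : F2 n // ¬ IsDeltaRegular f (Vp x) (αp x) δ}) : ℝ) ≤ δ * 2 ^ n := by
  obtain ⟨P, hcodim, hirr⟩ := AffinePartition.exists_codim_le_and_card_irregular_le hbd hδ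
  refine ⟨P.direction, P.base, P.add_base_mem, fun x y hy => ?_, fun x => ?_, ?_⟩
  · obtain ⟨hV, hα⟩ := P.eq_of_add_base_mem x y hy
    exact ⟨hV, by rw [hα, ZModModule.add_self]; exact zero_mem _⟩
  · exact (Nat.cast_le.2 (hcodim x)).trans (Nat.floor_le (by positivity))
  · exact hirr
end

section
/- Let n ≥ 2 and define f : 𝔽₂ⁿ → [-1,1] by f(x) = (1/n) · Σ_{i=1}^n (-1)^{x_i}. Then for every affine subspace 𝒰 = α + 𝒱 of 𝔽₂ⁿ with codim(𝒱) ≤ n/2 − 1 and every subspace 𝒲 with 𝒲 ⊕ 𝒱^⊥ = 𝔽₂ⁿ, there exists a nonzero γ ∈ 𝒲 with |f̂_𝒰(γ)| ≥ 1/n. In particular, for every δ < 1/n, f_𝒰 is not δ-regular on any affine subspace of codimension at most n/2 − 1. -/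
/-!
Write `wᵢ ∈ 𝒲` for the projection of the basis vector `eᵢ` onto `𝒲` along `𝒱^⊥`. Since
`f = (1/n) Σᵢ χ_{eᵢ}` and a character `χ_β` restricted to `α + 𝒱` has coefficient
`χ_β(α)·[β + γ ∈ 𝒱^⊥]` at `γ`, one gets `f̂_𝒰(γ) = (1/n) Σ_{i : wᵢ = γ} (-1)^{αᵢ}`.
If `|f̂_𝒰(γ)| < 1/n` for every nonzero `γ ∈ 𝒲`, each fibre `{i | wᵢ = γ}` over a nonzero value
carries a vanishing `±1`-sum, so it has even size, hence at least two elements. The nonzero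
`wᵢ` span `𝒲`, so they take at least `dim 𝒲 = dim 𝒱` values, and `n ≥ 2 dim 𝒱`, contradicting
`codim 𝒱 ≤ n/2 - 1`.
-/

open Finset

open Module

lemma neg_one_pow_val_add (a b : ZMod 2) :
    (-1 : ℝ) ^ (a + b).val = (-1) ^ a.val * (-1) ^ b.val := by
  rw [ZMod.val_add, ← neg_one_pow_eq_pow_mod_two, pow_add]

theorem Submodule.projectionOnto_eq_iff_sub_mem {R E : Type*} [Ring R] [AddCommGroup E]
    [Module R E] {p q : Submodule R E} (h : IsCompl p q) (x : E) (y : p) :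
    p.projectionOnto q h x = y ↔ x - y ∈ q := by
  rw [← projectionOnto_apply_eq_zero_iff h, map_sub, projectionOnto_apply_left, sub_eq_zero]

lemma even_card_of_abs_sum_neg_one_pow_lt_one {ι : Type*} (s : Finset ι) (e : ι → ℕ)
    (h : |∑ i ∈ s, (-1 : ℝ) ^ e i| < 1) : Even s.card := by
  set z : ℤ := ∑ i ∈ s, (-1) ^ e i
  have hz0 : z = 0 := by
    rw [← Int.abs_lt_one_iff, ← Int.cast_lt (R := ℝ)]
    push_cast [z]
    exact h
  rw [← ZMod.natCast_eq_zero_iff_even, ← Int.cast_natCast, ← Int.cast_zero (R := ZMod 2), ← hz0]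
  push_cast [z]
  simp [show (-1 : ZMod 2) = 1 by decide]

theorem two_mul_finrank_span_le_card {K M ι : Type*} [DivisionRing K] [AddCommGroup M]
    [Module K M] [Fintype ι] [DecidableEq M] (w : ι → M)
    (h : ∀ i, w i ≠ 0 → 2 ≤ #{j | w j = w i}) :
    2 * finrank K (Submodule.span K (Set.range w)) ≤ Fintype.card ι := by
  set T := (univ.filter (w · ≠ 0)).image w
  have hspan : Submodule.span K (Set.range w) = Submodule.span K T := by
    rw [← Submodule.span_sdiff_singleton_zero]
    congr 1
    ext
    simp only [T, coe_image, coe_filter, mem_univ, true_and]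
    grind
  have hfiber : ∀ γ ∈ T, 2 ≤ #{j | w j = γ} := by
    simp only [T, mem_image, mem_filter]
    rintro _ ⟨i, ⟨_, hi⟩, rfl⟩
    exact h i hi
  calc 2 * finrank K (Submodule.span K (Set.range w)) ≤ 2 * #T := by
        rw [hspan]; gcongr; exact finrank_span_finset_le_card T
    _ = ∑ _γ ∈ T, 2 := by simp [mul_comm]
    _ ≤ ∑ γ ∈ T, #{j | w j = γ} := sum_le_sum hfiber
    _ = #{j | w j ∈ T} := sum_card_fiberwise_eq_card_filter _ _ _
    _ ≤ Fintype.card ι := card_le_univ _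

section

variable {n : ℕ}

lemma ip_eq_dotProduct (γ x : F2 n) : ip γ x = γ ⬝ᵥ x := rfl

lemma perp_eq_orthogonal (V : Submodule (ZMod 2) (F2 n)) :
    perp V = (Matrix.toBilin' (1 : Matrix (Fin n) (Fin n) (ZMod 2))).orthogonal V := by
  ext γ
  simp [perp, LinearMap.BilinForm.mem_orthogonal_iff,
    Matrix.toBilin'_apply', ip_eq_dotProduct, dotProduct_comm]

lemma finrank_perp (V : Submodule (ZMod 2) (F2 n)) :
    finrank (ZMod 2) (perp V) = n - finrank (ZMod 2) V := by
  rw [perp_eq_orthogonal, LinearMap.BilinForm.finrank_orthogonal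
    (LinearMap.BilinForm.nondegenerate_toBilin'_of_det_ne_zero' _ (by simp)), finrank_fin_fun]

lemma chi_add_left (β γ x : F2 n) : chi (β + γ) x = chi β x * chi γ x := by
  rw [chi, ip_eq_dotProduct, add_dotProduct, neg_one_pow_val_add]; rfl

lemma chi_add_right (β x y : F2 n) : chi β (x + y) = chi β x * chi β y := by
  rw [chi, ip_eq_dotProduct, dotProduct_add, neg_one_pow_val_add]; rfl

lemma chi_single_one (i : Fin n) (x : F2 n) :
    chi (Pi.single i 1) x = (-1) ^ (x i).val := by
  simp [chi, ip_eq_dotProduct, single_dotProduct]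

open scoped Classical in
lemma sum_chi_submodule (V : Submodule (ZMod 2) (F2 n)) (β : F2 n) :
    ∑ x : V, chi β x = if β ∈ perp V then (Nat.card V : ℝ) else 0 := by
  split_ifs with hβ
  · simp [chi, (hβ _ (Subtype.prop _) : ip β _ = 0), Nat.card_eq_fintype_card]
  · let ψ : AddChar V ℝ :=
      { toFun := fun x => chi β x
        map_zero_eq_one' := by simp [chi, ip]
        map_add_eq_mul' := fun x y => chi_add_right β x y }
    apply AddChar.sum_eq_zero_of_ne_one (ψ := ψ)
    obtain ⟨v, hv, hβv⟩ : ∃ v ∈ V, ip β v ≠ 0 := by simpa [perp] using hβ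
    have hval : (ip β v).val = 1 := by
      have := ZMod.val_lt (ip β v); have := (ZMod.val_ne_zero _).2 hβv; omega
    intro hψ
    have := DFunLike.congr_fun hψ ⟨v, hv⟩
    norm_num [ψ, chi, hval] at this

open scoped Classical in
lemma restrictCoeff_eq_sum (f : F2 n → ℝ) (V : Submodule (ZMod 2) (F2 n)) (α γ : F2 n) :
    restrictCoeff f V α γ = (∑ x : V, f (x + α) * chi γ x) / Nat.card V := by
  rw [restrictCoeff, Finset.sum_indicator_eq_sum_filter,
    Finset.sum_subtype (p := (· ∈ V)) _ (fun x => by simp)]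

open scoped Classical in
lemma restrictCoeff_chi (V : Submodule (ZMod 2) (F2 n)) (α β γ : F2 n) :
    restrictCoeff (chi β) V α γ = if β + γ ∈ perp V then chi β α else 0 := by
  have hV : (Nat.card V : ℝ) ≠ 0 := Nat.cast_ne_zero.2 Nat.card_pos.ne'
  have hterm : ∀ x : V, chi β (x + α) * chi γ x = chi β α * chi (β + γ) x := fun x => by
    rw [chi_add_right, chi_add_left]; ring
  rw [restrictCoeff_eq_sum, Finset.sum_congr rfl fun x _ => hterm x, ← Finset.mul_sum,
    sum_chi_submodule]
  split_ifs
  · field_simp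
  · simp

lemma restrictCoeff_const_mul_sum {ι : Type*} (s : Finset ι) (c : ℝ)
    (g : ι → F2 n → ℝ) (V : Submodule (ZMod 2) (F2 n)) (α γ : F2 n) :
    restrictCoeff (fun x => c * ∑ i ∈ s, g i x) V α γ
      = c * ∑ i ∈ s, restrictCoeff (g i) V α γ := by
  classical
  simp_rw [restrictCoeff_eq_sum, Finset.mul_sum, Finset.sum_mul, Finset.sum_div]
  rw [Finset.sum_comm]
  simp_rw [mul_assoc, mul_div_assoc, Finset.mul_sum]

open scoped Classical in
lemma restrictCoeff_degree_one (V W : Submodule (ZMod 2) (F2 n))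
    (hW : IsCompl W (perp V)) (α : F2 n) (γ : W) :
    restrictCoeff (fun x => (1 / (n : ℝ)) * ∑ i, (-1 : ℝ) ^ ((x i).val)) V α γ
      = 1 / n * ∑ i with W.projectionOnto (perp V) hW (Pi.single i 1) = γ,
          (-1 : ℝ) ^ (α i).val := by
  have hf : (fun x : F2 n => (1 / (n : ℝ)) * ∑ i, (-1 : ℝ) ^ ((x i).val))
      = fun x => 1 / n * ∑ i, chi (Pi.single i 1) x := by
    simp only [chi_single_one]
  rw [hf, restrictCoeff_const_mul_sum, Finset.sum_filter]
  congr 1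
  refine Finset.sum_congr rfl fun i _ => ?_
  simp only [restrictCoeff_chi, chi_single_one, ← ZModModule.sub_eq_add,
    ← Submodule.projectionOnto_eq_iff_sub_mem hW]

lemma two_mul_finrank_le_of_forall_abs_restrictCoeff_lt
    (V W : Submodule (ZMod 2) (F2 n)) (hW : IsCompl W (perp V)) (α : F2 n)
    (hsmall : ∀ γ ∈ W, γ ≠ 0 →
      |restrictCoeff (fun x => (1 / (n : ℝ)) * ∑ i, (-1 : ℝ) ^ ((x i).val)) V α γ| < 1 / n) :
    2 * finrank (ZMod 2) W ≤ n := by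
  classical
  set w : Fin n → W := fun i => W.projectionOnto (perp V) hW (Pi.single i 1)
  have hfiber : ∀ i, w i ≠ 0 → 2 ≤ #{j | w j = w i} := by
    intro i hi
    have hlt := hsmall (w i) (w i).2 (by simpa using hi)
    rw [restrictCoeff_degree_one V W hW α (w i), abs_mul] at hlt
    have hn : (0 : ℝ) < 1 / n := (mul_nonneg (abs_nonneg _) (abs_nonneg _)).trans_lt hlt
    rw [abs_of_pos hn, mul_lt_iff_lt_one_right hn] at hlt
    obtain ⟨k, hk⟩ : Even #{j | w j = w i} := even_card_of_abs_sum_neg_one_pow_lt_one _ _ hlt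
    have hi : 0 < #{j | w j = w i} := card_pos.2 ⟨i, by simp⟩
    omega
  have hspan : Submodule.span (ZMod 2) (Set.range w) = ⊤ := by
    have : Set.range w =
        W.projectionOnto (perp V) hW '' Set.range (Pi.basisFun (ZMod 2) (Fin n)) := by
      rw [← Set.range_comp]
      congr 1
      funext i
      simp [w]
    rw [this, Submodule.span_image, Basis.span_eq, Submodule.map_top,
      Submodule.range_projectionOnto]
  have := two_mul_finrank_span_le_card (K := ZMod 2) w hfiber
  rwa [hspan, finrank_top, Fintype.card_fin] at this

end

theorem degree_one_lower_bound_general (n : ℕ)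
    (V : Submodule (ZMod 2) (F2 n)) (α : F2 n)
    (hcodim : ((n - Module.finrank (ZMod 2) V : ℕ) : ℝ) ≤ (n : ℝ) / 2 - 1)
    (W : Submodule (ZMod 2) (F2 n)) (hW : IsCompl W (perp V)) :
    (∃ γ ∈ W, γ ≠ 0 ∧
      (1 : ℝ) / n ≤
        |restrictCoeff (fun x => (1 / (n : ℝ)) * ∑ i, (-1 : ℝ) ^ ((x i).val)) V α γ|) ∧
    ∀ δ : ℝ, δ < 1 / (n : ℝ) →
      ¬ IsDeltaRegular (fun x => (1 / (n : ℝ)) * ∑ i, (-1 : ℝ) ^ ((x i).val)) V α δ := by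
  have key : ∃ γ ∈ W, γ ≠ 0 ∧ (1 : ℝ) / n ≤
      |restrictCoeff (fun x => (1 / (n : ℝ)) * ∑ i, (-1 : ℝ) ^ ((x i).val)) V α γ| := by
    by_contra! hsmall
    have hW_le := two_mul_finrank_le_of_forall_abs_restrictCoeff_lt V W hW α hsmall
    have hdim : finrank (ZMod 2) W + (n - finrank (ZMod 2) V) = n := by
      rw [← finrank_perp, Submodule.finrank_add_eq_of_isCompl hW, finrank_fin_fun]
    have hcodim' : 2 * (n - finrank (ZMod 2) V) + 2 ≤ n := by
      exact_mod_cast (by linarith : (2 * (n - finrank (ZMod 2) V : ℕ) + 2 : ℝ) ≤ n)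
    omega
  refine ⟨key, fun δ hδ hreg => ?_⟩
  obtain ⟨γ, hγW, hγ0, hγ⟩ := key
  linarith [hreg W hW γ hγW hγ0]

/-- the degree-one function f(x) = (1/n)Σᵢ(-1)^{xᵢ} has a nontrivial
Fourier coefficient of magnitude ≥ 1/n on every affine subspace of codimension
at most n/2 − 1; hence it is not δ-regular there for any δ < 1/n. -/
theorem degree_one_lower_bound (n : ℕ) (hn : 2 ≤ n)
    (V : Submodule (ZMod 2) (F2 n)) (α : F2 n)
    (hcodim : ((n - Module.finrank (ZMod 2) V : ℕ) : ℝ) ≤ (n : ℝ) / 2 - 1)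
    (W : Submodule (ZMod 2) (F2 n)) (hW : IsCompl W (perp V)) :
    (∃ γ ∈ W, γ ≠ 0 ∧
      (1 : ℝ) / n ≤
        |restrictCoeff (fun x => (1 / (n : ℝ)) * ∑ i, (-1 : ℝ) ^ ((x i).val)) V α γ|) ∧
    ∀ δ : ℝ, δ < 1 / (n : ℝ) →
      ¬ IsDeltaRegular (fun x => (1 / (n : ℝ)) * ∑ i, (-1 : ℝ) ^ ((x i).val)) V α δ :=
  degree_one_lower_bound_general n V α hcodim W hW
end

section
/- Let 𝒱 ⊆ 𝔽₂ⁿ be a linear subspace of codimension C and let 𝒲 be a linear subspace with 𝒲 ⊕ 𝒱^⊥ = 𝔽₂ⁿ. Then for every integer ℓ with 1 ≤ ℓ ≤ C + 1, there exists a set S_ℓ ⊆ 𝒲 with |S_ℓ| ≥ n − C(ℓ+1) such that for every γ ∈ S_ℓ: (1) the coset γ + 𝒱^⊥ contains exactly one vector of Hamming weight 1, and (2) for every integer t with 1 ≤ t ≤ ℓ, the number of vectors of Hamming weight t in γ + 𝒱^⊥ is at most 2 · binom(2C+1, t−1). -/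
open Finset

/-!
Put `P = 𝒱^⊥`, of dimension at most `C`. Take a basis of the span of the vectors of `P` of weight
at most `ℓ + 1` and let `B` be the union of their supports: `|B| ≤ C (ℓ + 1)` and every vector of
`P` of weight at most `ℓ + 1` vanishes outside `B`. For `i ∉ B` let `γᵢ ∈ 𝒲` represent the coset
`eᵢ + P`. If `β ∈ γᵢ + P` has weight `t ≤ ℓ`, then `β + eᵢ ∈ P` has weight at most `ℓ + 1`, so it
vanishes at `i` and has weight `t - 1`. Hence `eᵢ` is the only weight-one vector of the coset (which
also makes `i ↦ γᵢ` injective), and `β ↦ β + eᵢ` embeds the weight-`t` vectors of the coset into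
the weight-`(t - 1)` vectors of `P`. Over `𝔽₂` these are determined by their supports on an
information set of size `dim P ≤ C`, so there are at most `∑_{k < t} (C choose k)`, which is at most
`(2C + 1) choose (t - 1)` by Vandermonde's identity.
-/

section Hamming

variable {ι : Type*} [Fintype ι] {β : Type*} [AddCommGroup β] [DecidableEq β]

theorem hammingNorm_add_le (x y : ι → β) :
    hammingNorm (x + y) ≤ hammingNorm x + hammingNorm y := by
  have h := hammingDist_triangle 0 x (x + y)
  rwa [hammingDist_zero_left, hammingDist_eq_hammingNorm x, neg_add_cancel_left] at h

variable [DecidableEq ι]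

theorem hammingNorm_add_single_of_eq_zero {x : ι → β} {i : ι} {a : β} (hx : x i = 0)
    (ha : a ≠ 0) : hammingNorm (x + Pi.single i a) = hammingNorm x + 1 := by
  have hsupp : univ.filter (fun j => (x + Pi.single i a : ι → β) j ≠ 0) =
      insert i (univ.filter fun j => x j ≠ 0) := by
    ext j
    by_cases hj : j = i
    · subst hj; simp [hx, ha]
    · simp [hj]
  rw [hammingNorm, hsupp, card_insert_of_notMem (by simp [hx]), hammingNorm]

theorem hammingNorm_single {i : ι} {a : β} (ha : a ≠ 0) :
    hammingNorm (Pi.single i a : ι → β) = 1 := by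
  simpa using hammingNorm_add_single_of_eq_zero (x := 0) rfl ha

end Hamming

theorem Submodule.exists_informationSet {K ι : Type*} [Field K] [Fintype ι]
    (P : Submodule K (ι → K)) :
    ∃ I : Finset ι, #I ≤ Module.finrank K P ∧ ∀ v ∈ P, (∀ i ∈ I, v i = 0) → v = 0 := by
  classical
  let coord : ι → Module.Dual K P := fun i => (LinearMap.proj i).comp P.subtype
  obtain ⟨b, -, -, hspan, hli⟩ :=
    exists_linearIndepOn_extension (linearIndepOn_empty K coord) (Set.empty_subset Set.univ)
  refine ⟨b.toFinset, ?_, fun v hv hvI => ?_⟩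
  · simpa [Subspace.dual_finrank_eq] using hli.fintype_card_le_finrank
  · have hker : Submodule.span K (coord '' b) ≤ LinearMap.ker (Module.Dual.eval K P ⟨v, hv⟩) :=
      Submodule.span_le.2 <| by
        rintro _ ⟨i, hi, rfl⟩
        exact hvI i (Set.mem_toFinset.2 hi)
    funext j
    exact hker (hspan ⟨j, Set.mem_univ j, rfl⟩)

theorem sum_range_choose_le_choose_two_mul_add_one {c s : ℕ} (hs : s ≤ c + 1) :
    ∑ k ∈ range (s + 1), c.choose k ≤ (2 * c + 1).choose s := by
  rw [show 2 * c + 1 = c + (c + 1) by ring, Nat.add_choose_eq,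
    Finset.Nat.sum_antidiagonal_eq_sum_range_succ_mk]
  refine sum_le_sum fun k hk => Nat.le_mul_of_pos_right _ (Nat.choose_pos ?_)
  have := mem_range.1 hk
  omega

theorem zmod2_eq_of_ne_zero_iff : ∀ {a b : ZMod 2}, (a ≠ 0 ↔ b ≠ 0) → a = b := by
  decide

section WeightCount

variable {ι : Type*} [Fintype ι] (P : Submodule (ZMod 2) (ι → ZMod 2))

theorem card_hammingNorm_eq_le_sum_choose (s : ℕ) :
    Nat.card {v // v ∈ P ∧ hammingNorm v = s} ≤
      ∑ k ∈ range (s + 1), (Module.finrank (ZMod 2) P).choose k := by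
  classical
  obtain ⟨I, hIcard, hI⟩ := P.exists_informationSet
  let supp (v : ι → ZMod 2) : Finset ι := I.filter fun k => v k ≠ 0
  let T := (range (s + 1)).biUnion fun k => I.powersetCard k
  have hmaps : ∀ v : {v // v ∈ P ∧ hammingNorm v = s}, supp v ∈ T := by
    rintro ⟨v, -, hvs⟩
    refine mem_biUnion.2 ⟨#(supp v), mem_range.2 ?_, mem_powersetCard.2 ⟨filter_subset _ _, rfl⟩⟩
    have : #(supp v) ≤ hammingNorm v := card_le_card (filter_subset_filter _ (subset_univ I))
    omega
  have hinj : Function.Injective fun v : {v // v ∈ P ∧ hammingNorm v = s} =>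
      (⟨supp v, hmaps v⟩ : {J // J ∈ T}) := by
    intro v w hvw
    have hsupp : ∀ k ∈ I, v.1 k = w.1 k := fun k hk => by
      refine zmod2_eq_of_ne_zero_iff ?_
      simpa [supp, hk] using Finset.ext_iff.1 (congrArg Subtype.val hvw) k
    exact Subtype.ext (sub_eq_zero.1 (hI _ (P.sub_mem v.2.1 w.2.1)
      fun k hk => sub_eq_zero.2 (hsupp k hk)))
  calc Nat.card {v // v ∈ P ∧ hammingNorm v = s}
      ≤ Nat.card {J // J ∈ T} := Nat.card_le_card_of_injective _ hinj
    _ = #T := Nat.card_eq_finsetCard T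
    _ ≤ ∑ k ∈ range (s + 1), #(I.powersetCard k) := card_biUnion_le
    _ ≤ ∑ k ∈ range (s + 1), (Module.finrank (ZMod 2) P).choose k :=
        sum_le_sum fun k _ => card_powersetCard k I ▸ Nat.choose_le_choose k hIcard

theorem card_hammingNorm_eq_le_choose {c s : ℕ} (hP : Module.finrank (ZMod 2) P ≤ c)
    (hs : s ≤ c + 1) :
    Nat.card {v // v ∈ P ∧ hammingNorm v = s} ≤ (2 * c + 1).choose s :=
  calc Nat.card {v // v ∈ P ∧ hammingNorm v = s}
      ≤ ∑ k ∈ range (s + 1), (Module.finrank (ZMod 2) P).choose k :=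
        card_hammingNorm_eq_le_sum_choose P s
    _ ≤ ∑ k ∈ range (s + 1), c.choose k := sum_le_sum fun k _ => Nat.choose_le_choose k hP
    _ ≤ (2 * c + 1).choose s := sum_range_choose_le_choose_two_mul_add_one hs

end WeightCount

theorem exists_card_le_forall_hammingNorm_le_mem_spanJ {n : ℕ}
    (P : Submodule (ZMod 2) (F2 n)) (w : ℕ) :
    ∃ B : Finset (Fin n), #B ≤ Module.finrank (ZMod 2) P * w ∧
      ∀ v ∈ P, hammingNorm v ≤ w → v ∈ spanJ B := by
  classical
  obtain ⟨b, hbw, hspan, hli⟩ :=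
    exists_linearIndependent (ZMod 2) {u : P | hammingNorm (u : F2 n) ≤ w}
  have : Fintype b := hli.setFinite.fintype
  let B := b.toFinset.biUnion fun u => univ.filter fun i => (u : F2 n) i ≠ 0
  refine ⟨B, ?_, fun v hv hvw => ?_⟩
  · calc _ ≤ ∑ u ∈ b.toFinset, hammingNorm (u : F2 n) := card_biUnion_le
      _ ≤ ∑ _u ∈ b.toFinset, w := sum_le_sum fun u hu => hbw (Set.mem_toFinset.1 hu)
      _ = #b.toFinset * w := by rw [sum_const, smul_eq_mul]
      _ ≤ _ := Nat.mul_le_mul_right _ (by simpa using hli.fintype_card_le_finrank)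
  · have hle : Submodule.span (ZMod 2) b ≤ (spanJ B).comap P.subtype :=
      Submodule.span_le.2 fun u hu i hi => by_contra fun hui =>
        hi (mem_biUnion.2 ⟨u, Set.mem_toFinset.2 hu, by simpa using hui⟩)
    exact hle (hspan ▸ Submodule.subset_span (s := {u : P | hammingNorm (u : F2 n) ≤ w})
      (a := ⟨v, hv⟩) hvw)

theorem finrank_perp_add_finrank {n : ℕ} (V : Submodule (ZMod 2) (F2 n)) :
    Module.finrank (ZMod 2) (perp V) + Module.finrank (ZMod 2) V = n := by
  have hperp : perp V =
      V.dualAnnihilator.comap (dotProductEquiv (ZMod 2) (Fin n)).toLinearMap := by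
    ext γ
    simp only [Submodule.mem_comap, Submodule.mem_dualAnnihilator]
    rfl
  rw [hperp, Submodule.comap_equiv_eq_map_symm, LinearEquiv.finrank_map_eq, add_comm,
    Subspace.finrank_add_finrank_dualAnnihilator_eq, Module.finrank_fin_fun]

theorem Submodule.exists_mem_add_mem_of_codisjoint {M : Type*} [AddCommGroup M]
    [Module (ZMod 2) M] {W P : Submodule (ZMod 2) M} (h : Codisjoint W P) (x : M) :
    ∃ w ∈ W, x + w ∈ P := by
  obtain ⟨y, hy, z, hz, rfl⟩ := Submodule.mem_sup.1 (h.eq_top ▸ Submodule.mem_top : x ∈ W ⊔ P)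
  exact ⟨y, hy, by rwa [add_right_comm, ZModModule.add_self, zero_add]⟩

section Coset

variable {n : ℕ} {P : Submodule (ZMod 2) (F2 n)} {i : Fin n} {γ : F2 n} {ℓ : ℕ}

theorem add_mem_iff_add_single_mem (hγ : Pi.single i 1 + γ ∈ P) (β : F2 n) :
    β + γ ∈ P ↔ β + Pi.single i 1 ∈ P := by
  rw [← ZModModule.add_add_add_cancel β (Pi.single i 1) γ, P.add_mem_iff_left hγ]

theorem hammingNorm_add_single_add_one (hγ : Pi.single i 1 + γ ∈ P)
    (hi : ∀ v ∈ P, hammingNorm v ≤ ℓ + 1 → v i = 0) {β : F2 n} (hβ : β + γ ∈ P)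
    (hβℓ : hammingNorm β ≤ ℓ) : hammingNorm (β + Pi.single i 1) + 1 = hammingNorm β := by
  have hv := (add_mem_iff_add_single_mem hγ β).1 hβ
  have hvℓ : hammingNorm (β + Pi.single i 1) ≤ ℓ + 1 :=
    (hammingNorm_add_le _ _).trans (by rw [hammingNorm_single one_ne_zero]; omega)
  rw [← hammingNorm_add_single_of_eq_zero (hi _ hv hvℓ) one_ne_zero, add_assoc,
    ZModModule.add_self, add_zero]

theorem hammingNorm_eq_one_and_add_mem_iff (hγ : Pi.single i 1 + γ ∈ P)
    (hi : ∀ v ∈ P, hammingNorm v ≤ ℓ + 1 → v i = 0) (hℓ : 1 ≤ ℓ) (β : F2 n) :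
    hammingNorm β = 1 ∧ β + γ ∈ P ↔ β = Pi.single i 1 := by
  refine ⟨fun ⟨hβ1, hβ⟩ => ?_, fun hβ => hβ ▸ ⟨hammingNorm_single one_ne_zero, hγ⟩⟩
  have := hammingNorm_add_single_add_one hγ hi hβ (hβ1.trans_le hℓ)
  rw [← ZModModule.neg_eq_self (Pi.single i 1), ← add_eq_zero_iff_eq_neg,
    ← hammingNorm_eq_zero]
  omega

theorem card_hammingNorm_eq_one_add_mem (hγ : Pi.single i 1 + γ ∈ P)
    (hi : ∀ v ∈ P, hammingNorm v ≤ ℓ + 1 → v i = 0) (hℓ : 1 ≤ ℓ) :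
    Nat.card {β : F2 n // hammingNorm β = 1 ∧ β + γ ∈ P} = 1 := by
  rw [Nat.card_congr (Equiv.subtypeEquivRight (hammingNorm_eq_one_and_add_mem_iff hγ hi hℓ)),
    Nat.card_unique]

theorem card_hammingNorm_eq_add_mem_le (hγ : Pi.single i 1 + γ ∈ P)
    (hi : ∀ v ∈ P, hammingNorm v ≤ ℓ + 1 → v i = 0) {t : ℕ} (ht : t ≤ ℓ) :
    Nat.card {β : F2 n // hammingNorm β = t ∧ β + γ ∈ P} ≤
      Nat.card {v : F2 n // v ∈ P ∧ hammingNorm v = t - 1} := by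
  refine Nat.card_le_card_of_injective
    (fun β => ⟨β.1 + Pi.single i 1, (add_mem_iff_add_single_mem hγ β.1).1 β.2.2, ?_⟩)
    fun β β' h => Subtype.ext (add_left_injective _ (congrArg Subtype.val h))
  have := hammingNorm_add_single_add_one hγ hi β.2.2 (β.2.1.trans_le ht)
  omega

end Coset

/-- many cosets of 𝒱^⊥ contain exactly one weight-one vector and few
vectors of each higher weight t ≤ ℓ. -/
theorem low_weight_vecs_in_cosets (n C : ℕ) (V : Submodule (ZMod 2) (F2 n))
    (hC : n - Module.finrank (ZMod 2) V = C)
    (W : Submodule (ZMod 2) (F2 n)) (hW : IsCompl W (perp V))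
    (ℓ : ℕ) (hℓ1 : 1 ≤ ℓ) (hℓ2 : ℓ ≤ C + 1) :
    ∃ S : Finset (F2 n), ↑S ⊆ (W : Set (F2 n)) ∧ n - C * (ℓ + 1) ≤ S.card ∧
      ∀ γ ∈ S,
        Nat.card {β : F2 n // hammingNorm β = 1 ∧ β + γ ∈ perp V} = 1 ∧
        ∀ t : ℕ, 1 ≤ t → t ≤ ℓ →
          Nat.card {β : F2 n // hammingNorm β = t ∧ β + γ ∈ perp V} ≤
            2 * (2 * C + 1).choose (t - 1) := by
  classical
  have hP : Module.finrank (ZMod 2) (perp V) ≤ C := by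
    have := finrank_perp_add_finrank V
    omega
  obtain ⟨B, hBcard, hB⟩ := exists_card_le_forall_hammingNorm_le_mem_spanJ (perp V) (ℓ + 1)
  have hgood : ∀ i ∉ B, ∀ v ∈ perp V, hammingNorm v ≤ ℓ + 1 → v i = 0 :=
    fun i hi v hv hvℓ => hB v hv hvℓ i hi
  choose γ hγW hγ using fun i : Fin n =>
    Submodule.exists_mem_add_mem_of_codisjoint hW.codisjoint (Pi.single i 1)
  have hγinj : Set.InjOn γ ↑(univ \ B) := fun i hi j hj hij => by
    have := (hammingNorm_eq_one_and_add_mem_iff (hγ i) (hgood i (mem_sdiff.1 hi).2) hℓ1 _).1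
      ⟨hammingNorm_single one_ne_zero, hij ▸ hγ j⟩
    simpa [Pi.single_apply, eq_comm] using congrFun this j
  refine ⟨(univ \ B).image γ, by
    rw [coe_image]; exact Set.image_subset_iff.2 fun i _ => hγW i, ?_, ?_⟩
  · rw [card_image_of_injOn hγinj, card_sdiff_of_subset (subset_univ B), card_univ,
      Fintype.card_fin]
    exact Nat.sub_le_sub_left (hBcard.trans (Nat.mul_le_mul_right _ hP)) n
  · simp only [mem_image, mem_sdiff, mem_univ, true_and]
    rintro _ ⟨i, hi, rfl⟩
    refine ⟨card_hammingNorm_eq_one_add_mem (hγ i) (hgood i hi) hℓ1, fun t _ ht => ?_⟩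
    calc _ ≤ Nat.card {v : F2 n // v ∈ perp V ∧ hammingNorm v = t - 1} :=
          card_hammingNorm_eq_add_mem_le (hγ i) (hgood i hi) ht
      _ ≤ (2 * C + 1).choose (t - 1) := card_hammingNorm_eq_le_choose _ hP (by omega)
      _ ≤ 2 * (2 * C + 1).choose (t - 1) := Nat.le_mul_of_pos_left _ two_pos
end
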